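/- One-sided Lipschitz stability via Gronwall: suppose X, Z ∈ C([0,T],ℝ) satisfy X_t − Z_t = ∫_0^t (b_s(X) − b_s(Z) + g_s) ds + Q_t − R_t, where b satisfies the one-sided Lipschitz condition (b_t(X) − b_t(Z) ≤ C‖X−Z‖_t if X_t ≥ Z_t, and ≥ −C‖X−Z‖_t if X_t ≤ Z_t) and |g_s| ≤ L‖X−Z‖_s + h_s for a nonnegative integrable function h. Then ‖X − Z‖_T ≤ exp(T(C+L))(2‖Q−R‖_T + ∫_0^T h_s ds). -/
import Mathlib

open MeasureTheory intervalIntegral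

/-- The running sup norm `‖X‖_t = sup_{0 ≤ s ≤ t} |X_s|`. -/
noncomputable def supNorm (X : ℝ → ℝ) (t : ℝ) : ℝ :=
  ⨆ s : Set.Icc (0 : ℝ) t, |X s|

section SupNormAux

variable {X : ℝ → ℝ} {t : ℝ}

lemma supNorm_bdd (hX : Continuous X) (t : ℝ) :
    BddAbove (Set.range fun s : Set.Icc (0 : ℝ) t => |X s|) := by
  have he : (fun s : Set.Icc (0 : ℝ) t => |X (s : ℝ)|) = (fun s : ℝ => |X s|) ∘ Subtype.val := rfl
  rw [he, Set.range_comp, Subtype.range_coe]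
  exact (isCompact_Icc.image_of_continuousOn hX.abs.continuousOn).bddAbove

lemma le_supNorm (hX : Continuous X) {s : ℝ} (hs : s ∈ Set.Icc 0 t) : |X s| ≤ supNorm X t :=
  le_ciSup (supNorm_bdd hX t) (⟨s, hs⟩ : Set.Icc (0 : ℝ) t)

lemma supNorm_nonneg (hX : Continuous X) (ht : 0 ≤ t) : 0 ≤ supNorm X t :=
  (abs_nonneg _).trans (le_supNorm hX ⟨le_refl 0, ht⟩)

lemma supNorm_le (ht : 0 ≤ t) {M : ℝ} (hM : ∀ s ∈ Set.Icc (0 : ℝ) t, |X s| ≤ M) :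
    supNorm X t ≤ M := by
  haveI : Nonempty (Set.Icc (0 : ℝ) t) := (Set.nonempty_Icc.mpr ht).to_subtype
  exact ciSup_le fun s => hM s s.2

lemma supNorm_exists (hX : Continuous X) (ht : 0 ≤ t) :
    ∃ s ∈ Set.Icc (0 : ℝ) t, supNorm X t = |X s| := by
  obtain ⟨s, hs, hmax⟩ := isCompact_Icc.exists_isMaxOn (Set.nonempty_Icc.mpr ht)
    hX.abs.continuousOn
  exact ⟨s, hs, le_antisymm (supNorm_le ht fun u hu => hmax hu) (le_supNorm hX hs)⟩

lemma supNorm_mono (hX : Continuous X) {t₁ t₂ : ℝ} (h0 : 0 ≤ t₁) (h : t₁ ≤ t₂) :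
    supNorm X t₁ ≤ supNorm X t₂ :=
  supNorm_le h0 fun s hs => le_supNorm hX ⟨hs.1, hs.2.trans h⟩

lemma supNorm_of_neg (h : t < 0) : supNorm X t = 0 := by
  haveI : IsEmpty (Set.Icc (0 : ℝ) t) :=
    Set.isEmpty_coe_sort.mpr (Set.Icc_eq_empty (not_le.mpr h))
  rw [supNorm, iSup, Set.range_eq_empty, Real.sSup_empty]

lemma supNorm_monotone (hX : Continuous X) : Monotone (supNorm X) := by
  intro t₁ t₂ h
  rcases le_or_gt 0 t₁ with h0 | h0
  · exact supNorm_mono hX h0 h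
  · rw [supNorm_of_neg h0]
    rcases le_or_gt 0 t₂ with h2 | h2
    · exact supNorm_nonneg hX h2
    · rw [supNorm_of_neg h2]

lemma supNorm_continuousOn (hX : Continuous X) {T : ℝ} (hT : 0 ≤ T) :
    ContinuousOn (supNorm X) (Set.Icc 0 T) := by
  -- uniform continuity of |X| on [0,T]
  have hu : UniformContinuousOn (fun s => |X s|) (Set.Icc (0 : ℝ) T) :=
    isCompact_Icc.uniformContinuousOn_of_continuous hX.abs.continuousOn
  rw [Metric.uniformContinuousOn_iff] at hu
  rw [Metric.continuousOn_iff]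
  intro t₀ ht₀ ε hε
  obtain ⟨δ, hδ, hδ'⟩ := hu (ε / 2) (by linarith)
  refine ⟨δ, hδ, fun t ht hdist => ?_⟩
  -- key: for a ≤ b in [0,T] with b - a < δ, supNorm b ≤ supNorm a + ε/2
  have key : ∀ a b : ℝ, a ∈ Set.Icc (0:ℝ) T → b ∈ Set.Icc (0:ℝ) T → a ≤ b → b - a < δ →
      supNorm X b ≤ supNorm X a + ε / 2 := by
    intro a b ha hb hab hd
    refine supNorm_le (ha.1.trans hab) fun s hs => ?_
    rcases le_or_gt s a with h | h
    · exact le_trans (le_supNorm hX ⟨hs.1, h⟩) (by linarith [hε])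
    · have hsT : s ∈ Set.Icc (0:ℝ) T := ⟨hs.1, hs.2.trans hb.2⟩
      have haT : a ∈ Set.Icc (0:ℝ) T := ha
      have : dist s a < δ := by
        rw [Real.dist_eq, abs_of_pos (by linarith : (0:ℝ) < s - a)]
        linarith [hs.2]
      have := hδ' s hsT a haT this
      rw [Real.dist_eq] at this
      have h1 : |X s| ≤ |X a| + ε / 2 := by
        have := abs_sub_le_iff.mp this.le
        linarith [this.1]
      exact h1.trans (by linarith [le_supNorm hX ⟨ha.1, le_refl a⟩])
  rw [Real.dist_eq] at hdist ⊢
  rcases le_total t t₀ with h | h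
  · have h1 := key t t₀ ht ht₀ h (by rw [abs_sub_comm] at hdist; rw [abs_of_nonneg (by linarith)] at hdist; linarith)
    have h2 := supNorm_mono hX ht.1 h
    rw [abs_sub_comm, abs_of_nonneg (by linarith)]
    linarith
  · have h1 := key t₀ t ht₀ ht h (by rw [abs_of_nonneg (by linarith)] at hdist; linarith)
    have h2 := supNorm_mono hX ht₀.1 h
    rw [abs_of_nonneg (by linarith)]
    linarith

end SupNormAux

/-- Key estimate: if `D` is continuous, `D u = ∫_0^u F + P u` on `[0,t]`, `F` is integrable on
`[0,s✶]`, `F ≤ ph` wherever `D ≥ 0`, `ph` is nonnegative and integrable, and `|P| ≤ B` on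
`[0,t]`, then `D s✶ ≤ 2B + ∫_0^t ph` for `s✶ ∈ [0,t]` with `D s✶ > 0`. -/
lemma key_pos {T t s₁ : ℝ} {D P F ph : ℝ → ℝ} {B : ℝ}
    (hD : Continuous D) (ht : t ∈ Set.Icc (0:ℝ) T) (hs₁ : s₁ ∈ Set.Icc (0:ℝ) t)
    (hpos : 0 < D s₁)
    (hsol : ∀ u ∈ Set.Icc (0:ℝ) t, D u = (∫ s in (0:ℝ)..u, F s) + P u)
    (hint : IntervalIntegrable F volume 0 s₁)
    (hF : ∀ s ∈ Set.Icc (0:ℝ) T, 0 ≤ D s → F s ≤ ph s)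
    (hph_int : IntervalIntegrable ph volume 0 T)
    (hph_nonneg : ∀ s ∈ Set.Icc (0:ℝ) T, 0 ≤ ph s)
    (hB : ∀ u ∈ Set.Icc (0:ℝ) t, |P u| ≤ B) :
    D s₁ ≤ 2 * B + ∫ s in (0:ℝ)..t, ph s := by
  have hB0 : 0 ≤ B := le_trans (abs_nonneg _) (hB 0 ⟨le_refl 0, hs₁.1.trans hs₁.2⟩)
  set S : Set ℝ := Set.Icc 0 s₁ ∩ D ⁻¹' {0} with hS
  have hSc : IsCompact S := isCompact_Icc.inter_right (isClosed_singleton.preimage hD)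
  -- find σ
  have hσ : ∃ σ ∈ Set.Icc (0:ℝ) s₁, D σ - P σ ≤ B ∧ ∀ u ∈ Set.Icc σ s₁, 0 ≤ D u := by
    rcases Set.eq_empty_or_nonempty S with hSe | hSne
    · refine ⟨0, ⟨le_refl 0, hs₁.1⟩, ?_, ?_⟩
      · have h0 : D 0 = P 0 := by
          have := hsol 0 ⟨le_refl 0, hs₁.1.trans hs₁.2⟩
          simpa using this
        simp [h0, hB0]
      · intro u hu
        by_contra hneg
        push_neg at hneg
        have hus : u ≤ s₁ := hu.2
        have : (0:ℝ) ∈ Set.Icc (D u) (D s₁) := ⟨hneg.le, hpos.le⟩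
        obtain ⟨v, hv, hv0⟩ := intermediate_value_Icc hus hD.continuousOn this
        have : v ∈ S := ⟨⟨hu.1.trans hv.1, hv.2⟩, hv0⟩
        rw [hSe] at this
        exact this
    · set σ := sSup S with hσdef
      have hσS : σ ∈ S := hSc.sSup_mem hSne
      refine ⟨σ, hσS.1, ?_, ?_⟩
      · have : D σ = 0 := hσS.2
        rw [this, zero_sub]
        exact (neg_le_abs _).trans (hB σ ⟨hσS.1.1, hσS.1.2.trans hs₁.2⟩)
      · intro u hu
        by_contra hneg
        push_neg at hneg
        have hσu : σ < u := lt_of_le_of_ne hu.1 (fun he => by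
          rw [← he] at hneg; rw [(hσS.2 : D σ = 0)] at hneg; exact lt_irrefl 0 hneg)
        have hus : u ≤ s₁ := hu.2
        have : (0:ℝ) ∈ Set.Icc (D u) (D s₁) := ⟨hneg.le, hpos.le⟩
        obtain ⟨v, hv, hv0⟩ := intermediate_value_Icc hus hD.continuousOn this
        have hvS : v ∈ S := ⟨⟨hσS.1.1.trans (hu.1.trans hv.1), hv.2⟩, hv0⟩
        have : v ≤ σ := le_csSup hSc.bddAbove hvS
        linarith [hv.1]
  obtain ⟨σ, hσs, hσP, hσnn⟩ := hσ
  have hσt : σ ∈ Set.Icc (0:ℝ) t := ⟨hσs.1, hσs.2.trans hs₁.2⟩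
  -- integral splitting
  have hint1 : IntervalIntegrable F volume 0 σ :=
    hint.mono_set (Set.uIcc_subset_uIcc (by simp [Set.left_mem_uIcc])
      (by rw [Set.uIcc_of_le hs₁.1]; exact hσs))
  have hint2 : IntervalIntegrable F volume σ s₁ :=
    hint.mono_set (Set.uIcc_subset_uIcc (by rw [Set.uIcc_of_le hs₁.1]; exact hσs)
      (by rw [Set.uIcc_of_le hs₁.1]; exact ⟨hs₁.1, le_refl s₁⟩))
  have hsplit : (∫ s in (0:ℝ)..σ, F s) + (∫ s in σ..s₁, F s) = ∫ s in (0:ℝ)..s₁, F s :=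
    integral_add_adjacent_intervals hint1 hint2
  have hs₁sol := hsol s₁ hs₁
  have hσsol := hsol σ hσt
  have hD1 : D s₁ = (D σ - P σ) + (∫ s in σ..s₁, F s) + P s₁ := by
    rw [hs₁sol, hσsol, ← hsplit]; ring
  -- bound the integral
  have hphint_t : IntervalIntegrable ph volume 0 t :=
    hph_int.mono_set (Set.uIcc_subset_uIcc (by simp [Set.left_mem_uIcc])
      (by rw [Set.uIcc_of_le (ht.1.trans ht.2)]; exact ht))
  have hphint_σ : IntervalIntegrable ph volume σ s₁ :=
    hphint_t.mono_set (Set.uIcc_subset_uIcc (by rw [Set.uIcc_of_le ht.1]; exact hσt)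
      (by rw [Set.uIcc_of_le ht.1]; exact hs₁))
  have hmono : (∫ s in σ..s₁, F s) ≤ ∫ s in σ..s₁, ph s := by
    refine integral_mono_on hσs.2 hint2 hphint_σ fun x hx => ?_
    exact hF x ⟨hσs.1.trans hx.1, (hx.2.trans hs₁.2).trans ht.2⟩ (hσnn x hx)
  have hmono2 : (∫ s in σ..s₁, ph s) ≤ ∫ s in (0:ℝ)..t, ph s := by
    refine integral_mono_interval hσs.1 hσs.2 hs₁.2 ?_ hphint_t
    refine (ae_restrict_iff' measurableSet_Ioc).mpr (Filter.Eventually.of_forall fun x hx => ?_)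
    exact hph_nonneg x ⟨hx.1.le, hx.2.trans ht.2⟩
  have hPs₁ : P s₁ ≤ B := (le_abs_self _).trans (hB s₁ hs₁)
  calc D s₁ = (D σ - P σ) + (∫ s in σ..s₁, F s) + P s₁ := hD1
    _ ≤ B + (∫ s in (0:ℝ)..t, ph s) + B := by
        have := hmono.trans hmono2
        gcongr
    _ = 2 * B + ∫ s in (0:ℝ)..t, ph s := by ring

/-- one-sided Lipschitz stability via Gronwall. If
`X_t − Z_t = ∫_0^t (b_s(X) − b_s(Z) + g_s) ds + Q_t − R_t`, `b` satisfies the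
one-sided Lipschitz condition with constant `C`, and `|g_s| ≤ L‖X−Z‖_s + h_s`
with `h ≥ 0` integrable on `[0,T]`, then
`‖X − Z‖_T ≤ exp(T(C+L))(2‖Q−R‖_T + ∫_0^T h_s ds)`. -/
theorem one_sided_lipschitz_gronwall_stability
    (T C L : ℝ) (hT : 0 < T) (hC : 0 ≤ C) (hL : 0 ≤ L)
    (b : ℝ → (ℝ → ℝ) → ℝ) (X Z Q R : ℝ → ℝ) (g h : ℝ → ℝ)
    (hXc : Continuous X) (hZc : Continuous Z) (hQc : Continuous Q) (hRc : Continuous R)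
    (hinit : X 0 - Z 0 = Q 0 - R 0)
    (hb_upper : ∀ t ∈ Set.Icc (0 : ℝ) T, Z t ≤ X t →
      b t X - b t Z ≤ C * supNorm (fun s => X s - Z s) t)
    (hb_lower : ∀ t ∈ Set.Icc (0 : ℝ) T, X t ≤ Z t →
      -(C * supNorm (fun s => X s - Z s) t) ≤ b t X - b t Z)
    (hg : ∀ s ∈ Set.Icc (0 : ℝ) T, |g s| ≤ L * supNorm (fun r => X r - Z r) s + h s)
    (hh_nonneg : ∀ s ∈ Set.Icc (0 : ℝ) T, 0 ≤ h s)
    (hh_int : IntervalIntegrable h MeasureTheory.volume 0 T)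
    (hsol : ∀ t ∈ Set.Icc (0 : ℝ) T,
      X t - Z t = (∫ s in (0 : ℝ)..t, (b s X - b s Z + g s)) + Q t - R t) :
    supNorm (fun s => X s - Z s) T ≤
      Real.exp (T * (C + L)) *
        (2 * supNorm (fun s => Q s - R s) T + ∫ s in (0 : ℝ)..T, h s) := by
  set D : ℝ → ℝ := fun s => X s - Z s with hDdef
  set P : ℝ → ℝ := fun s => Q s - R s with hPdef
  have hDc : Continuous D := hXc.sub hZc
  have hPc : Continuous P := hQc.sub hRc
  set K : ℝ := C + L with hKdef
  set B : ℝ := supNorm P T with hBdef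
  set A : ℝ := 2 * B + ∫ s in (0 : ℝ)..T, h s with hAdef
  have hK0 : 0 ≤ K := add_nonneg hC hL
  have hB0 : 0 ≤ B := supNorm_nonneg hPc hT.le
  have hInt0 : 0 ≤ ∫ s in (0:ℝ)..T, h s := intervalIntegral.integral_nonneg hT.le hh_nonneg
  have hA0 : 0 ≤ A := by rw [hAdef]; linarith
  have hφcont : ContinuousOn (supNorm D) (Set.Icc 0 T) := supNorm_continuousOn hDc hT.le
  have hφnonneg : ∀ u : ℝ, 0 ≤ supNorm D u := by
    intro u
    rcases le_or_gt 0 u with hu | hu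
    · exact supNorm_nonneg hDc hu
    · rw [supNorm_of_neg hu]
  have hφint : IntervalIntegrable (supNorm D) volume 0 T :=
    (by rwa [Set.uIcc_of_le hT.le] : ContinuousOn (supNorm D) (Set.uIcc 0 T)).intervalIntegrable
  set ph : ℝ → ℝ := fun s => K * supNorm D s + h s with hphdef
  have hph_int : IntervalIntegrable ph volume 0 T := (hφint.const_mul K).add hh_int
  have hph_nonneg : ∀ s ∈ Set.Icc (0:ℝ) T, 0 ≤ ph s := fun s hs =>
    add_nonneg (mul_nonneg hK0 (hφnonneg s)) (hh_nonneg s hs)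
  set F : ℝ → ℝ := fun s => b s X - b s Z + g s with hFdef
  -- main integral inequality
  have main : ∀ t ∈ Set.Icc (0:ℝ) T, supNorm D t ≤ A + K * ∫ s in (0:ℝ)..t, supNorm D s := by
    intro t ht
    have hψt0 : 0 ≤ ∫ s in (0:ℝ)..t, supNorm D s :=
      intervalIntegral.integral_nonneg ht.1 fun u _ => hφnonneg u
    have hKψ : 0 ≤ K * ∫ s in (0:ℝ)..t, supNorm D s := mul_nonneg hK0 hψt0
    obtain ⟨s₁, hs₁, hmax⟩ := supNorm_exists hDc ht.1
    have hs₁T : s₁ ∈ Set.Icc (0:ℝ) T := ⟨hs₁.1, hs₁.2.trans ht.2⟩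
    by_cases hzero : D s₁ = 0
    · rw [hmax, hzero, abs_zero]; linarith
    by_cases hFint : IntervalIntegrable F volume 0 s₁
    · -- the main case
      have hsol' : ∀ u ∈ Set.Icc (0:ℝ) t, D u = (∫ s in (0:ℝ)..u, F s) + P u := by
        intro u hu
        have := hsol u ⟨hu.1, hu.2.trans ht.2⟩
        show X u - Z u = _
        rw [this]; show _ = _ + (Q u - R u); ring
      have hhint_t : IntervalIntegrable h volume 0 t :=
        hh_int.mono_set (Set.uIcc_subset_uIcc Set.left_mem_uIcc
          (by rw [Set.uIcc_of_le hT.le]; exact ht))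
      have hφint_t : IntervalIntegrable (supNorm D) volume 0 t :=
        hφint.mono_set (Set.uIcc_subset_uIcc Set.left_mem_uIcc
          (by rw [Set.uIcc_of_le hT.le]; exact ht))
      have hkey : |D s₁| ≤ 2 * B + ∫ s in (0:ℝ)..t, ph s := by
        rcases Ne.lt_or_gt hzero with hneg | hpos
        · have h1 : -D s₁ ≤ 2 * B + ∫ s in (0:ℝ)..t, ph s := by
            apply key_pos (T := T) (D := fun u => -D u) (P := fun u => -P u)
              (F := fun u => -F u) (ph := ph) (B := B) hDc.neg ht hs₁ (by simpa using hneg)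
            · intro u hu
              rw [intervalIntegral.integral_neg, hsol' u hu]; ring
            · exact hFint.neg
            · intro s hs hDs
              have hDs' : D s ≤ 0 := by simpa using hDs
              have hXZ : X s ≤ Z s := by
                rw [hDdef] at hDs'; simpa [sub_nonpos] using hDs'
              have h1 := hb_lower s hs hXZ
              have h2 := (neg_le_abs (g s)).trans (hg s hs)
              have hKe : K * supNorm D s = C * supNorm D s + L * supNorm D s := by
                rw [hKdef]; ring
              show -F s ≤ ph s
              simp only [hFdef, hphdef]
              linarith
            · exact hph_int
            · exact hph_nonneg
            · intro u hu
              rw [abs_neg]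
              exact le_supNorm hPc ⟨hu.1, hu.2.trans ht.2⟩
          rw [abs_of_neg hneg]; exact h1
        · have h1 : D s₁ ≤ 2 * B + ∫ s in (0:ℝ)..t, ph s := by
            apply key_pos (T := T) (F := F) (ph := ph) (B := B) hDc ht hs₁ hpos hsol' hFint
            · intro s hs hDs
              have hZX : Z s ≤ X s := by
                have hDs' : (0:ℝ) ≤ D s := hDs
                rw [hDdef] at hDs'; simpa [sub_nonneg] using hDs'
              have h1 := hb_upper s hs hZX
              have h2 := (le_abs_self (g s)).trans (hg s hs)
              have hKe : K * supNorm D s = C * supNorm D s + L * supNorm D s := by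
                rw [hKdef]; ring
              show F s ≤ ph s
              simp only [hFdef, hphdef]
              linarith
            · exact hph_int
            · exact hph_nonneg
            · intro u hu
              exact le_supNorm hPc ⟨hu.1, hu.2.trans ht.2⟩
          rw [abs_of_pos hpos]; exact h1
      have hsplit : (∫ s in (0:ℝ)..t, ph s)
          = K * (∫ s in (0:ℝ)..t, supNorm D s) + ∫ s in (0:ℝ)..t, h s := by
        rw [hphdef]
        rw [intervalIntegral.integral_add (hφint_t.const_mul K) hhint_t,
          intervalIntegral.integral_const_mul]
      have hht : (∫ s in (0:ℝ)..t, h s) ≤ ∫ s in (0:ℝ)..T, h s := by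
        refine integral_mono_interval le_rfl ht.1 ht.2 ?_ hh_int
        refine (ae_restrict_iff' measurableSet_Ioc).mpr (Filter.Eventually.of_forall fun x hx => ?_)
        exact hh_nonneg x ⟨hx.1.le, hx.2⟩
      rw [hmax, hAdef]
      refine hkey.trans ?_
      rw [hsplit]
      linarith [hht]
    · -- F not integrable: the integral is 0 and D s₁ = P s₁
      have h0 : (∫ s in (0:ℝ)..s₁, F s) = 0 := intervalIntegral.integral_undef hFint
      have hDP : D s₁ = P s₁ := by
        have hs := hsol s₁ hs₁T
        show X s₁ - Z s₁ = Q s₁ - R s₁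
        rw [hs]
        show (∫ s in (0:ℝ)..s₁, F s) + Q s₁ - R s₁ = _
        rw [h0]; ring
      have hle : |D s₁| ≤ B := hDP ▸ le_supNorm hPc hs₁T
      rw [hmax, hAdef]; linarith
  -- Gronwall step
  set ψ : ℝ → ℝ := fun u => ∫ s in (0:ℝ)..u, supNorm D s with hψdef
  have hψcont : ContinuousOn ψ (Set.Icc 0 T) := by
    have := intervalIntegral.continuousOn_primitive_interval'
      (μ := volume) (b₁ := (0:ℝ)) (b₂ := T) (f := supNorm D) hφint Set.left_mem_uIcc
    rwa [Set.uIcc_of_le hT.le] at this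
  have hφmeas : StronglyMeasurable (supNorm D) :=
    (supNorm_monotone hDc).measurable.stronglyMeasurable
  have hderiv : ∀ x ∈ Set.Ico (0:ℝ) T, HasDerivWithinAt ψ (supNorm D x) (Set.Ici x) x := by
    intro x hx
    have hxint : IntervalIntegrable (supNorm D) volume 0 x :=
      hφint.mono_set (Set.uIcc_subset_uIcc Set.left_mem_uIcc
        (by rw [Set.uIcc_of_le hT.le]; exact ⟨hx.1, hx.2.le⟩))
    have hcw : ContinuousWithinAt (supNorm D) (Set.Ici x) x := by
      have hmem : Set.Icc (0:ℝ) T ∈ nhdsWithin x (Set.Ici x) := by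
        apply Filter.mem_of_superset (inter_mem_nhdsWithin _ (Iio_mem_nhds hx.2))
        intro u hu
        exact ⟨hx.1.trans hu.1, hu.2.le⟩
      exact (hφcont x ⟨hx.1, hx.2.le⟩).mono_of_mem_nhdsWithin hmem
    exact intervalIntegral.integral_hasDerivWithinAt_right (s := Set.Ici x) (t := Set.Ioi x)
      hxint hφmeas.stronglyMeasurableAtFilter (hcw.mono Set.Ioi_subset_Ici_self)
  have gron : ∀ x ∈ Set.Icc (0:ℝ) T, ψ x ≤ gronwallBound 0 K A (x - 0) := by
    apply le_gronwallBound_of_liminf_deriv_right_le hψcont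
      (fun x hx r hr => (hderiv x hx).liminf_right_slope_le hr)
    · rw [hψdef]; simp [intervalIntegral.integral_same]
    · intro x hx
      have hm := main x ⟨hx.1, hx.2.le⟩
      have : ψ x = ∫ s in (0:ℝ)..x, supNorm D s := rfl
      rw [this]; linarith
  have hψT := gron T ⟨hT.le, le_refl T⟩
  have hfin := main T ⟨hT.le, le_refl T⟩
  have hψTe : ψ T = ∫ s in (0:ℝ)..T, supNorm D s := rfl
  have hgb : A + K * gronwallBound 0 K A (T - 0) = Real.exp (T * K) * A := by
    rcases eq_or_ne K 0 with hK | hK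
    · rw [hK, gronwallBound_K0]
      simp
    · simp only [gronwallBound_of_K_ne_0 hK, sub_zero, mul_comm K T]
      field_simp
      ring
  calc supNorm D T ≤ A + K * ψ T := by rw [hψTe]; linarith
    _ ≤ A + K * gronwallBound 0 K A (T - 0) := by nlinarith
    _ = Real.exp (T * K) * A := hgb
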